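/- Define M : ℤ × ℤ → ℤ by: M(i,j) = 2 if 3i + j ≡ 9 (mod 10); otherwise M(i,j) = 0 if i + j is odd; otherwise M(i,j) = −1 if j − i ≡ 0 (mod 4) and M(i,j) = 1 if j − i ≡ 2 (mod 4). Then the wild density of M equals 2/5: the ratio W(r)/T(r) tends to 2/5 as r → ∞, where T(r) is the number of points (i,j) ∈ ℤ² with i² + j² ≤ r² and W(r) is the number of such points at which M(i,j) is wild. -/

import Mathlib

/-- An SL2-tiling over a commutative ring `R`. -/
def IsSL2Tiling {R : Type*} [CommRing R] (m : ℤ × ℤ → R) : Prop :=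
  ∀ i j : ℤ, m (i, j) * m (i + 1, j + 1) - m (i, j + 1) * m (i + 1, j) = 1

/-- The determinant of the 3×3 block of `m` centred at `(i, j)`. -/
def nbhdDet {R : Type*} [CommRing R] (m : ℤ × ℤ → R) (i j : ℤ) : R :=
  (Matrix.of fun u v : Fin 3 => m (i + ((u : ℕ) : ℤ) - 1, j + ((v : ℕ) : ℤ) - 1)).det

/-- The entry `m (i, j)` is wild if the surrounding 3×3 determinant is nonzero. -/
def IsWild {R : Type*} [CommRing R] (m : ℤ × ℤ → R) (i j : ℤ) : Prop :=
  nbhdDet m i j ≠ 0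

/-- The number of integer points within distance `r` of the origin. -/
noncomputable def totalCount (r : ℕ) : ℕ :=
  Set.ncard {p : ℤ × ℤ | p.1 ^ 2 + p.2 ^ 2 ≤ (r : ℤ) ^ 2}

/-- The number of wild entries of `m` within distance `r` of the origin. -/
noncomputable def wildCount {R : Type*} [CommRing R] (m : ℤ × ℤ → R) (r : ℕ) : ℕ :=
  Set.ncard {p : ℤ × ℤ | p.1 ^ 2 + p.2 ^ 2 ≤ (r : ℤ) ^ 2 ∧ IsWild m p.1 p.2}

/-- The anti-periodic tiling by the 2×2 identity matrix, modified by placing the nonzero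
entry `2` at each point of the sublattice `{(i, j) : 3i + j ≡ 9 (mod 10)}`. -/
def Mex : ℤ × ℤ → ℤ := fun p =>
  if (3 * p.1 + p.2) % 10 = 9 then 2
  else if (p.1 + p.2) % 2 = 1 then 0
  else if (p.2 - p.1) % 4 = 0 then -1 else 1

/-!
In an SL2-tiling, the 3×3 determinant around an entry times that entry is a combination of the
unimodularity relations (Dodgson condensation), so nonzero entries are tame. At a zero of `Mex`
the determinant is the sum of the four diagonal neighbours, which are `0` or `2` with at least
one `2`; hence the wild entries of `Mex` are exactly its zeros. These form a set invariant under
`10ℤ²` that meets `40` of the `100` residue classes. Each residue class meets the disc of radius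
`r` in between `T(r/10 - 2)` and `T(r/10 + 3)` points, and `T(n)/n²` converges to the (positive)
area of the unit disc, so the density is `40/100`.
-/

open Filter Topology MeasureTheory Pointwise

lemma nbhdDet_eq {R : Type*} [CommRing R] (m : ℤ × ℤ → R) (i j : ℤ) :
    nbhdDet m i j =
      m (i - 1, j - 1) * m (i, j) * m (i + 1, j + 1)
      + m (i - 1, j) * m (i, j + 1) * m (i + 1, j - 1)
      + m (i - 1, j + 1) * m (i, j - 1) * m (i + 1, j)
      - m (i - 1, j + 1) * m (i, j) * m (i + 1, j - 1)
      - m (i - 1, j) * m (i, j - 1) * m (i + 1, j + 1)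
      - m (i - 1, j - 1) * m (i, j + 1) * m (i + 1, j) := by
  simp only [nbhdDet, Matrix.det_fin_three, Matrix.of_apply]
  norm_num
  simp only [show ∀ k : ℤ, k + 2 - 1 = k + 1 from fun k => by ring]
  ring

namespace IsSL2Tiling

variable {R : Type*} [CommRing R] {m : ℤ × ℤ → R}

-- Dodgson condensation: the four 2×2 minors of the block are all equal to `1`.
lemma nbhdDet_mul_eq_zero (hm : IsSL2Tiling m) (i j : ℤ) : nbhdDet m i j * m (i, j) = 0 := by
  have h₁ := hm (i - 1) (j - 1)
  have h₂ := hm i j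
  have h₃ := hm (i - 1) j
  have h₄ := hm i (j - 1)
  simp only [sub_add_cancel] at h₁ h₃ h₄
  rw [nbhdDet_eq]
  linear_combination (m (i, j) * m (i + 1, j + 1) - m (i, j + 1) * m (i + 1, j)) * h₁ + h₂
    - (m (i, j - 1) * m (i + 1, j) - m (i, j) * m (i + 1, j - 1)) * h₃ - h₄

lemma eq_zero_of_isWild [NoZeroDivisors R] (hm : IsSL2Tiling m) {i j : ℤ} (hw : IsWild m i j) :
    m (i, j) = 0 :=
  (mul_eq_zero.1 (hm.nbhdDet_mul_eq_zero i j)).resolve_left hw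

end IsSL2Tiling

section Mex

variable {i j : ℤ}

lemma Mex_eq_two (h : (3 * i + j) % 10 = 9) : Mex (i, j) = 2 := if_pos h

lemma Mex_eq_zero (h : (i + j) % 2 = 1) (h' : (3 * i + j) % 10 ≠ 9) : Mex (i, j) = 0 := by
  simp only [Mex, if_neg h', if_pos h]

lemma Mex_eq_one (h : (i + j) % 2 = 0) (h' : (j - i) % 4 = 2) : Mex (i, j) = 1 := by
  simp only [Mex, if_neg (by omega : ¬(3 * i + j) % 10 = 9), if_neg (by omega : ¬(i + j) % 2 = 1),
    if_neg (by omega : ¬(j - i) % 4 = 0)]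

lemma Mex_eq_neg_one (h : (i + j) % 2 = 0) (h' : (j - i) % 4 = 0) : Mex (i, j) = -1 := by
  simp only [Mex, if_neg (by omega : ¬(3 * i + j) % 10 = 9), if_neg (by omega : ¬(i + j) % 2 = 1),
    if_pos h']

lemma Mex_eq_zero_iff : Mex (i, j) = 0 ↔ (i + j) % 2 = 1 ∧ (3 * i + j) % 10 ≠ 9 := by
  dsimp only [Mex]
  split_ifs <;> norm_num <;> omega

lemma Mex_nonneg_of_odd (h : (i + j) % 2 = 1) : 0 ≤ Mex (i, j) := by
  by_cases h' : (3 * i + j) % 10 = 9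
  · rw [Mex_eq_two h']; norm_num
  · rw [Mex_eq_zero h h']

end Mex

lemma isSL2Tiling_Mex : IsSL2Tiling Mex := by
  intro i j
  by_cases hp : (i + j) % 2 = 0
  · have hoff : Mex (i, j + 1) * Mex (i + 1, j) = 0 := by
      by_cases h9 : (3 * i + (j + 1)) % 10 = 9
      · rw [Mex_eq_zero (i := i + 1) (by omega) (by omega), mul_zero]
      · rw [Mex_eq_zero (by omega) h9, zero_mul]
    rw [hoff]
    by_cases h4 : (j - i) % 4 = 0
    · rw [Mex_eq_neg_one hp h4, Mex_eq_neg_one (by omega) (by omega)]; ring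
    · rw [Mex_eq_one hp (by omega), Mex_eq_one (by omega) (by omega)]; ring
  · have hdiag : Mex (i, j) * Mex (i + 1, j + 1) = 0 := by
      by_cases h9 : (3 * i + j) % 10 = 9
      · rw [Mex_eq_zero (i := i + 1) (j := j + 1) (by omega) (by omega), mul_zero]
      · rw [Mex_eq_zero (by omega) h9, zero_mul]
    rw [hdiag]
    by_cases h4 : (j - i) % 4 = 1
    · rw [Mex_eq_one (i := i) (j := j + 1) (by omega) (by omega),
        Mex_eq_neg_one (i := i + 1) (j := j) (by omega) (by omega)]; ring
    · rw [Mex_eq_one (i := i + 1) (j := j) (by omega) (by omega),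
        Mex_eq_neg_one (i := i) (j := j + 1) (by omega) (by omega)]; ring

-- At a zero of `Mex` the determinant is the sum of the four diagonal neighbours; these are
-- `0` or `2`, and one of them lies on the lattice of `2`s.
lemma isWild_Mex_of_eq_zero {i j : ℤ} (h : Mex (i, j) = 0) : IsWild Mex i j := by
  obtain ⟨hodd, h9⟩ := Mex_eq_zero_iff.1 h
  have hdet : nbhdDet Mex i j =
      Mex (i - 1, j - 1) + Mex (i - 1, j + 1) + Mex (i + 1, j - 1) + Mex (i + 1, j + 1) := by
    rw [nbhdDet_eq, h]
    by_cases h4 : (j - i) % 4 = 1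
    · rw [Mex_eq_one (i := i - 1) (j := j) (by omega) (by omega),
        Mex_eq_neg_one (i := i + 1) (j := j) (by omega) (by omega),
        Mex_eq_neg_one (i := i) (j := j - 1) (by omega) (by omega),
        Mex_eq_one (i := i) (j := j + 1) (by omega) (by omega)]
      ring
    · rw [Mex_eq_neg_one (i := i - 1) (j := j) (by omega) (by omega),
        Mex_eq_one (i := i + 1) (j := j) (by omega) (by omega),
        Mex_eq_one (i := i) (j := j - 1) (by omega) (by omega),
        Mex_eq_neg_one (i := i) (j := j + 1) (by omega) (by omega)]
      ring
  have c₁ := Mex_nonneg_of_odd (i := i - 1) (j := j - 1) (by omega)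
  have c₂ := Mex_nonneg_of_odd (i := i - 1) (j := j + 1) (by omega)
  have c₃ := Mex_nonneg_of_odd (i := i + 1) (j := j - 1) (by omega)
  have c₄ := Mex_nonneg_of_odd (i := i + 1) (j := j + 1) (by omega)
  have htwo : 2 ≤ nbhdDet Mex i j := by
    rw [hdet]
    rcases (by omega : (3 * i + j) % 10 = 1 ∨ (3 * i + j) % 10 = 3 ∨ (3 * i + j) % 10 = 5 ∨
      (3 * i + j) % 10 = 7) with h | h | h | h
    · rw [Mex_eq_two (i := i - 1) (j := j + 1) (by omega)]; omega
    · rw [Mex_eq_two (i := i - 1) (j := j - 1) (by omega)]; omega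
    · rw [Mex_eq_two (i := i + 1) (j := j + 1) (by omega)]; omega
    · rw [Mex_eq_two (i := i + 1) (j := j - 1) (by omega)]; omega
  exact ne_of_gt (by omega)

lemma isWild_Mex_iff {i j : ℤ} : IsWild Mex i j ↔ (i + j) % 2 = 1 ∧ (3 * i + j) % 10 ≠ 9 :=
  ⟨fun hw => Mex_eq_zero_iff.1 (isSL2Tiling_Mex.eq_zero_of_isWild hw),
    fun h => isWild_Mex_of_eq_zero (Mex_eq_zero_iff.2 h)⟩

def disc (r : ℕ) : Set (ℤ × ℤ) := {p | p.1 ^ 2 + p.2 ^ 2 ≤ (r : ℤ) ^ 2}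

@[simp]
lemma mem_disc {r : ℕ} {p : ℤ × ℤ} : p ∈ disc r ↔ p.1 ^ 2 + p.2 ^ 2 ≤ (r : ℤ) ^ 2 := Iff.rfl

lemma totalCount_eq_ncard_disc (r : ℕ) : totalCount r = (disc r).ncard := rfl

def unitDisc : Set (Fin 2 → ℝ) := {x | x 0 ^ 2 + x 1 ^ 2 ≤ 1}

lemma isBounded_unitDisc : Bornology.IsBounded unitDisc := by
  refine (Metric.isBounded_closedBall (x := (0 : Fin 2 → ℝ)) (r := 1)).subset fun x hx => ?_
  have hx : x 0 ^ 2 + x 1 ^ 2 ≤ 1 := hx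
  rw [mem_closedBall_zero_iff, pi_norm_le_iff_of_nonneg zero_le_one]
  intro i
  rw [Real.norm_eq_abs, abs_le]
  fin_cases i <;> constructor <;> simp <;> nlinarith [sq_nonneg (x 0), sq_nonneg (x 1)]

lemma convex_unitDisc : Convex ℝ unitDisc := by
  have hsq : ConvexOn ℝ Set.univ fun t : ℝ => t ^ 2 := Even.convexOn_pow even_two
  let π (i : Fin 2) : (Fin 2 → ℝ) →ₗ[ℝ] ℝ := LinearMap.proj i
  simpa [unitDisc, π] using ((hsq.comp_linearMap (π 0)).add (hsq.comp_linearMap (π 1))).convex_le 1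

lemma isClosed_unitDisc : IsClosed unitDisc :=
  isClosed_le (by fun_prop) continuous_const

lemma volume_real_unitDisc_pos : 0 < volume.real unitDisc := by
  refine ENNReal.toReal_pos (ne_of_gt ?_) (isBounded_unitDisc.measure_lt_top).ne
  refine (Metric.measure_ball_pos volume (0 : Fin 2 → ℝ) one_half_pos).trans_le
    (measure_mono fun x hx => ?_)
  rw [mem_ball_zero_iff, pi_norm_lt_iff one_half_pos] at hx
  have h0 := abs_lt.1 (hx 0)
  have h1 := abs_lt.1 (hx 1)
  show x 0 ^ 2 + x 1 ^ 2 ≤ 1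
  nlinarith

-- `n⁻¹ • span ℤ (range (Pi.basisFun ℝ _))` is the lattice `n⁻¹ℤ²`.
lemma card_unitDisc_inter_smul_span (n : ℕ) [NeZero n] :
    Nat.card ↑(unitDisc ∩ (n : ℝ)⁻¹ • (Submodule.span ℤ (Set.range (Pi.basisFun ℝ (Fin 2))) :
      Set (Fin 2 → ℝ))) = totalCount n := by
  have hn : (n : ℝ) ≠ 0 := Nat.cast_ne_zero.2 (NeZero.ne n)
  set f : ℤ × ℤ → Fin 2 → ℝ := fun p => ![p.1 / n, p.2 / n]
  have hf : Function.Injective f := fun p q h => by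
    have h0 := congrFun h 0
    have h1 := congrFun h 1
    simp only [f, Matrix.cons_val_zero, Matrix.cons_val_one, div_left_inj' hn,
      Int.cast_inj] at h0 h1
    exact Prod.ext h0 h1
  have himage : unitDisc ∩ (n : ℝ)⁻¹ • (Submodule.span ℤ (Set.range (Pi.basisFun ℝ (Fin 2))) :
      Set (Fin 2 → ℝ)) = f '' disc n := by
    ext x
    rw [Set.mem_inter_iff, ← Submodule.coe_pointwise_smul, SetLike.mem_coe,
      BoxIntegral.unitPartition.mem_smul_span_iff]
    simp only [Set.mem_image, unitDisc, disc, Set.mem_ofPred_eq, eq_intCast, Set.mem_range]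
    constructor
    · rintro ⟨hx, hL⟩
      obtain ⟨a, ha⟩ := hL 0
      obtain ⟨b, hb⟩ := hL 1
      refine ⟨(a, b), ?_, ?_⟩
      · have hab : ((a : ℝ) ^ 2 + (b : ℝ) ^ 2) ≤ (n : ℝ) ^ 2 := by
          rw [ha, hb]; nlinarith [sq_nonneg (n : ℝ)]
        exact_mod_cast hab
      · ext i; fin_cases i <;> simp [f, ha, hb, hn]
    · rintro ⟨p, hp, rfl⟩
      refine ⟨?_, fun i => ?_⟩
      · have hp' : ((p.1 : ℝ) ^ 2 + (p.2 : ℝ) ^ 2) ≤ (n : ℝ) ^ 2 := by exact_mod_cast hp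
        simp only [f, Matrix.cons_val_zero, Matrix.cons_val_one, div_pow, ← add_div]
        exact div_le_one_of_le₀ hp' (sq_nonneg _)
      · fin_cases i <;> exact ⟨_, (mul_div_cancel₀ _ hn).symm⟩
  rw [himage, Nat.card_coe_set_eq, Set.ncard_image_of_injective _ hf, totalCount_eq_ncard_disc]

lemma tendsto_totalCount_div_sq :
    Tendsto (fun n : ℕ => (totalCount n : ℝ) / n ^ 2) atTop (𝓝 (volume.real unitDisc)) := by
  have h := tendsto_card_div_pow_atTop_volume unitDisc isBounded_unitDisc
    isClosed_unitDisc.measurableSet (convex_unitDisc.addHaar_frontier volume)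
  refine h.congr' ?_
  filter_upwards [eventually_ne_atTop 0] with n hn
  have : NeZero n := ⟨hn⟩
  rw [card_unitDisc_inter_smul_span, Fintype.card_fin]

lemma tendsto_totalCount_comp_div_sq {k : ℕ} (hk : 0 < k) {g : ℕ → ℕ} {C : ℝ}
    (hg : ∀ r, |(g r : ℝ) - r / k| ≤ C) :
    Tendsto (fun r => (totalCount (g r) : ℝ) / r ^ 2) atTop
      (𝓝 (volume.real unitDisc / k ^ 2)) := by
  have hk' : (0 : ℝ) < k := Nat.cast_pos.2 hk
  have hratio : Tendsto (fun r : ℕ => (g r : ℝ) / r) atTop (𝓝 (1 / k)) := by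
    have herr : Tendsto (fun r : ℕ => ((g r : ℝ) - r / k) / r) atTop (𝓝 0) := by
      refine squeeze_zero_norm' ?_ (tendsto_const_div_atTop_nhds_zero_nat C)
      filter_upwards with r
      rw [norm_div, Real.norm_natCast]
      exact div_le_div_of_nonneg_right (hg r) (Nat.cast_nonneg r)
    have := herr.add_const (1 / (k : ℝ))
    rw [zero_add] at this
    refine this.congr' ?_
    filter_upwards [eventually_ne_atTop 0] with r hr
    field_simp
    ring
  have hg_atTop : Tendsto g atTop atTop := by
    refine tendsto_natCast_atTop_iff.1 (tendsto_atTop_mono (fun r => ?_)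
      (tendsto_atTop_add_const_right atTop (-C)
        (tendsto_natCast_atTop_atTop.atTop_div_const hk')))
    linarith [(abs_le.1 (hg r)).1]
  have hmain := (tendsto_totalCount_div_sq.comp hg_atTop).mul (hratio.pow 2)
  rw [div_pow, one_pow, ← div_eq_mul_one_div] at hmain
  refine hmain.congr' ?_
  filter_upwards [hg_atTop.eventually_ne_atTop 0, eventually_ne_atTop 0] with r hgr hr
  simp only [Function.comp_apply]
  field_simp

lemma abs_natCast_div_sub_div_le_one (r k : ℕ) : |((r / k : ℕ) : ℝ) - r / k| ≤ 1 := by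
  rw [abs_sub_comm, abs_le]
  have h := Nat.lt_floor_add_one ((r : ℝ) / k)
  rw [Nat.floor_div_eq_div] at h
  constructor <;> linarith [Nat.cast_div_le (α := ℝ) (m := r) (n := k)]

lemma add_sq_add_add_sq_le {α : Type*} [CommRing α] [LinearOrder α] [IsStrictOrderedRing α]
    {x y a b R D : α} (hR : 0 ≤ R) (hD : 0 ≤ D) (hxy : x ^ 2 + y ^ 2 ≤ R ^ 2)
    (hab : a ^ 2 + b ^ 2 ≤ D ^ 2) : (x + a) ^ 2 + (y + b) ^ 2 ≤ (R + D) ^ 2 := by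
  have hprod := mul_le_mul hab hxy (by positivity) (sq_nonneg D)
  have hcs : (a * x + b * y) ^ 2 ≤ (D * R) ^ 2 := by nlinarith [sq_nonneg (a * y - b * x)]
  nlinarith [le_abs_self (a * x + b * y), abs_le_of_sq_le_sq hcs (mul_nonneg hD hR)]

lemma finite_disc (r : ℕ) : (disc r).Finite := by
  refine ((Set.finite_Icc (-(r : ℤ)) r).prod (Set.finite_Icc (-(r : ℤ)) r)).subset ?_
  rintro ⟨i, j⟩ h
  rw [mem_disc] at h
  exact ⟨abs_le.1 (abs_le_of_sq_le_sq (by nlinarith) (Nat.cast_nonneg r)),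
    abs_le.1 (abs_le_of_sq_le_sq (by nlinarith) (Nat.cast_nonneg r))⟩

def residueBox (k : ℕ) : Set (ℤ × ℤ) := Set.Ico 0 (k : ℤ) ×ˢ Set.Ico 0 (k : ℤ)

lemma sq_add_sq_le_of_mem_residueBox {k : ℕ} {a : ℤ × ℤ} (ha : a ∈ residueBox k) :
    a.1 ^ 2 + a.2 ^ 2 ≤ (2 * k : ℤ) ^ 2 := by
  obtain ⟨⟨h1, h2⟩, h3, h4⟩ := ha
  nlinarith

section Periodic

variable {k : ℕ} {P : ℤ × ℤ → Prop}

lemma ncard_mul_totalCount_le (hP : ∀ i j m n : ℤ, P (i + k * m, j + k * n) ↔ P (i, j))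
    {r s : ℕ} (hsr : k * (s + 2) ≤ r) :
    {a ∈ residueBox k | P a}.ncard * totalCount s ≤ {p ∈ disc r | P p}.ncard := by
  rw [totalCount_eq_ncard_disc, ← Set.ncard_prod]
  refine Set.ncard_le_ncard_of_injOn (fun x => (x.1.1 + k * x.2.1, x.1.2 + k * x.2.2)) ?_ ?_
    ((finite_disc r).subset fun _ hp => hp.1)
  · rintro ⟨⟨a, b⟩, q₁, q₂⟩ ⟨⟨hbox, hab⟩, hq⟩
    dsimp only at hbox hab hq ⊢
    rw [mem_disc] at hq
    refine ⟨?_, (hP a b q₁ q₂).2 hab⟩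
    have hkq : (k * q₁) ^ 2 + (k * q₂) ^ 2 ≤ ((k : ℤ) * s) ^ 2 := by
      rw [mul_pow, mul_pow, mul_pow, ← mul_add]
      exact mul_le_mul_of_nonneg_left hq (sq_nonneg _)
    have hr : (k : ℤ) * s + 2 * k ≤ r := by exact_mod_cast (by linarith : k * s + 2 * k ≤ r)
    have := add_sq_add_add_sq_le (by positivity) (by positivity) hkq
      (sq_add_sq_le_of_mem_residueBox hbox)
    rw [mem_disc]
    dsimp only at this ⊢
    calc (a + k * q₁) ^ 2 + (b + k * q₂) ^ 2 = (k * q₁ + a) ^ 2 + (k * q₂ + b) ^ 2 := by ring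
      _ ≤ ((k : ℤ) * s + 2 * k) ^ 2 := this
      _ ≤ (r : ℤ) ^ 2 := pow_le_pow_left₀ (by positivity) hr 2
  · rintro ⟨⟨a, b⟩, q₁, q₂⟩ ⟨⟨⟨⟨ha₀, ha⟩, hb₀, hb⟩, -⟩, -⟩ ⟨⟨a', b'⟩, q₁', q₂'⟩
      ⟨⟨⟨⟨ha₀', ha'⟩, hb₀', hb'⟩, -⟩, -⟩ h
    simp only [Prod.mk.injEq] at h
    have hk : (k : ℤ) ≠ 0 := by omega
    have hdiv : ∀ c q : ℤ, 0 ≤ c → c < k → (c + k * q) / k = q := fun c q h₀ h₁ => by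
      rw [Int.add_mul_ediv_left _ _ hk, Int.ediv_eq_zero_of_lt h₀ h₁, zero_add]
    have h₁ : q₁ = q₁' := by rw [← hdiv a q₁ ha₀ ha, h.1, hdiv a' q₁' ha₀' ha']
    have h₂ : q₂ = q₂' := by rw [← hdiv b q₂ hb₀ hb, h.2, hdiv b' q₂' hb₀' hb']
    subst h₁ h₂
    simp only [add_left_inj] at h
    rw [h.1, h.2]

lemma ncard_le_ncard_mul_totalCount (hP : ∀ i j m n : ℤ, P (i + k * m, j + k * n) ↔ P (i, j))
    (hk : 0 < k) {r s : ℕ} (hrs : r + 2 * k ≤ k * s) :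
    {p ∈ disc r | P p}.ncard ≤ {a ∈ residueBox k | P a}.ncard * totalCount s := by
  rw [totalCount_eq_ncard_disc, ← Set.ncard_prod]
  have hk' : (0 : ℤ) < k := by exact_mod_cast hk
  refine Set.ncard_le_ncard_of_injOn
    (fun p => ((p.1 % k, p.2 % k), (p.1 / k, p.2 / k))) ?_ ?_
    ((((Set.finite_Ico _ _).prod (Set.finite_Ico _ _)).subset fun _ ha => ha.1).prod
      (finite_disc s))
  · rintro ⟨i, j⟩ ⟨hp, hij⟩
    rw [mem_disc] at hp
    have hbox : (i % k, j % k) ∈ residueBox k :=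
      ⟨⟨Int.emod_nonneg _ hk'.ne', Int.emod_lt_of_pos _ hk'⟩,
        Int.emod_nonneg _ hk'.ne', Int.emod_lt_of_pos _ hk'⟩
    refine ⟨⟨hbox, ?_⟩, ?_⟩
    · rwa [← hP _ _ (i / k) (j / k), Int.emod_add_mul_ediv, Int.emod_add_mul_ediv]
    · have := add_sq_add_add_sq_le (Nat.cast_nonneg r) (by positivity) hp
        (a := -(i % k)) (b := -(j % k)) (D := 2 * k)
        (by simpa only [neg_sq] using sq_add_sq_le_of_mem_residueBox hbox)
      have hs : (r : ℤ) + 2 * k ≤ k * s := by exact_mod_cast hrs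
      have hq : ((k : ℤ) * (i / k)) ^ 2 + ((k : ℤ) * (j / k)) ^ 2 ≤ ((k : ℤ) * s) ^ 2 := by
        rw [show (k : ℤ) * (i / k) = i + -(i % k) by linarith [Int.emod_add_mul_ediv i k],
          show (k : ℤ) * (j / k) = j + -(j % k) by linarith [Int.emod_add_mul_ediv j k]]
        exact this.trans (pow_le_pow_left₀ (by positivity) hs 2)
      rw [mul_pow, mul_pow, mul_pow, ← mul_add] at hq
      exact mem_disc.2 (le_of_mul_le_mul_left hq (by positivity))
  · rintro ⟨i, j⟩ - ⟨i', j'⟩ - h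
    simp only [Prod.mk.injEq] at h
    rw [← Int.emod_add_mul_ediv i k, ← Int.emod_add_mul_ediv j k, h.1.1, h.1.2, h.2.1, h.2.2,
      Int.emod_add_mul_ediv, Int.emod_add_mul_ediv]

theorem tendsto_ncard_sep_div_totalCount
    (hP : ∀ i j m n : ℤ, P (i + k * m, j + k * n) ↔ P (i, j)) (hk : 0 < k) :
    Tendsto (fun r => ({p ∈ disc r | P p}.ncard : ℝ) / totalCount r) atTop
      (𝓝 ({a ∈ residueBox k | P a}.ncard / k ^ 2)) := by
  set N := {a ∈ residueBox k | P a}.ncard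
  have hlow_err : ∀ r, |((r / k - 2 : ℕ) : ℝ) - r / k| ≤ 4 := fun r => by
    have := abs_le.1 (abs_natCast_div_sub_div_le_one r k)
    have h₁ : ((r / k - 2 : ℕ) : ℝ) ≤ (r / k : ℕ) := Nat.cast_le.2 (Nat.sub_le _ _)
    have h₂ : ((r / k : ℕ) : ℝ) ≤ (r / k - 2 : ℕ) + 2 := by
      exact_mod_cast (by omega : r / k ≤ r / k - 2 + 2)
    rw [abs_le]; constructor <;> linarith
  have hup_err : ∀ r, |((r / k + 3 : ℕ) : ℝ) - r / k| ≤ 4 := fun r => by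
    have := abs_le.1 (abs_natCast_div_sub_div_le_one r k)
    push_cast
    rw [abs_le]; constructor <;> linarith
  have hlow := (tendsto_totalCount_comp_div_sq hk hlow_err).const_mul (N : ℝ)
  have hup := (tendsto_totalCount_comp_div_sq hk hup_err).const_mul (N : ℝ)
  have hcount : Tendsto (fun r => ({p ∈ disc r | P p}.ncard : ℝ) / r ^ 2) atTop
      (𝓝 (N * (volume.real unitDisc / k ^ 2))) := by
    refine tendsto_of_tendsto_of_tendsto_of_le_of_le' hlow hup ?_ ?_
    · filter_upwards [eventually_ge_atTop (2 * k)] with r hr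
      have h2 : 2 ≤ r / k := (Nat.le_div_iff_mul_le hk).2 (by linarith)
      rw [← mul_div_assoc]
      gcongr
      have hsr : k * (r / k - 2 + 2) ≤ r := by rw [Nat.sub_add_cancel h2]; exact Nat.mul_div_le r k
      exact_mod_cast ncard_mul_totalCount_le hP hsr
    · filter_upwards with r
      rw [← mul_div_assoc]
      gcongr
      have := Nat.lt_div_mul_add (a := r) hk
      exact_mod_cast ncard_le_ncard_mul_totalCount hP hk (by nlinarith)
  have hc : volume.real unitDisc ≠ 0 := volume_real_unitDisc_pos.ne'
  convert (hcount.div tendsto_totalCount_div_sq hc).congr' ?_ using 2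
  · field_simp
  · filter_upwards [eventually_ne_atTop 0] with r hr
    simp only [Pi.div_apply]
    field_simp

end Periodic

theorem Mex_wild_density_eq_two_fifths :
    Filter.Tendsto (fun r : ℕ => (wildCount Mex r : ℝ) / (totalCount r : ℝ))
      Filter.atTop (nhds (2 / 5)) := by
  set P : ℤ × ℤ → Prop := fun p => (p.1 + p.2) % 2 = 1 ∧ (3 * p.1 + p.2) % 10 ≠ 9
  have hP : ∀ i j m n : ℤ, P (i + (10 : ℕ) * m, j + (10 : ℕ) * n) ↔ P (i, j) := by
    intro i j m n
    simp only [P]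
    omega
  have hwild : ∀ r, wildCount Mex r = {p ∈ disc r | P p}.ncard := fun r => by
    simp only [wildCount, isWild_Mex_iff]
    rfl
  have hres : {a ∈ residueBox 10 | P a}.ncard = 40 := by
    have : {a ∈ residueBox 10 | P a} =
        ((Finset.Ico 0 10 ×ˢ Finset.Ico 0 10).filter P : Finset (ℤ × ℤ)) := by
      ext; simp [residueBox]
    rw [this, Set.ncard_coe_finset]
    decide
  convert tendsto_ncard_sep_div_totalCount hP (by norm_num) using 2 with r
  · rw [hwild]
  · rw [hres]
    norm_num
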